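/- arXiv:2605.00711 — 3 statements merged into one kernel-verified Lean document; each statement's English description precedes it below -/
import Mathlib

section
/- Let (α^k)_{k≥0} be a sequence of positive reals bounded below by ᾱ > 0 with α⁰ ≥ ᾱ, and define γ^0 = 1 and γ^k = α^k/α^{k-1} for k ≥ 1. Let θ^k = Σ_{t=0}^{k-1} γ^t. Then for all k ≥ 2, θ^k ≥ k·(ᾱ/α⁰)^{1/k}; in particular there exists K ≥ 2 such that θ^k ≥ k/2 for all k ≥ K, so 1/θ^k = O(1/k). -/
/-- linear growth of the ergodic normalization `θ k = Σ_{t<k} γ t`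
for `γ 0 = 1`, `γ k = α k / α (k-1)`, with `α` bounded below by `ᾱ > 0`. -/
theorem stmt5 (αbar : ℝ) (hαbar : 0 < αbar) (α : ℕ → ℝ) (hlow : ∀ k, αbar ≤ α k)
    (γ : ℕ → ℝ) (hγ0 : γ 0 = 1) (hγ : ∀ k, 1 ≤ k → γ k = α k / α (k - 1))
    (θ : ℕ → ℝ) (hθ : ∀ k, θ k = ∑ t ∈ Finset.range k, γ t) :
    (∀ k : ℕ, 2 ≤ k → (k : ℝ) * (αbar / α 0) ^ ((1 : ℝ) / (k : ℝ)) ≤ θ k) ∧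
    ∃ K : ℕ, 2 ≤ K ∧ ∀ k ≥ K, (k : ℝ) / 2 ≤ θ k := by
  have hαpos : ∀ k, 0 < α k := fun k => hαbar.trans_le (hlow k)
  have hγpos : ∀ t, 0 < γ t := by
    intro t
    rcases Nat.eq_zero_or_pos t with h | h
    · simp [h, hγ0]
    · rw [hγ t h]; exact div_pos (hαpos t) (hαpos (t - 1))
  have hprod : ∀ k, 1 ≤ k → ∏ t ∈ Finset.range k, γ t = α (k - 1) / α 0 := by
    intro k hk
    induction k with
    | zero => omega
    | succ n ih =>
      rcases Nat.eq_zero_or_pos n with h | h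
      · subst h; simp [hγ0, div_self (hαpos 0).ne']
      · rw [Finset.prod_range_succ, ih h, hγ n h]
        have hn : n + 1 - 1 = n := by omega
        have h0 : α 0 ≠ 0 := (hαpos 0).ne'
        have h1 : α (n - 1) ≠ 0 := (hαpos (n - 1)).ne'
        rw [hn]
        field_simp
  set c : ℝ := αbar / α 0 with hc
  have hcpos : 0 < c := div_pos hαbar (hαpos 0)
  have hmain : ∀ k : ℕ, 1 ≤ k → (k : ℝ) * c ^ ((1 : ℝ) / (k : ℝ)) ≤ θ k := by
    intro k hk
    have hkpos : (0 : ℝ) < (k : ℝ) := by exact_mod_cast hk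
    have hw : ∀ i ∈ Finset.range k, (0 : ℝ) ≤ 1 / (k : ℝ) := fun i _ => by positivity
    have hw' : ∑ i ∈ Finset.range k, (1 : ℝ) / (k : ℝ) = 1 := by
      rw [Finset.sum_const, Finset.card_range, nsmul_eq_mul]
      field_simp
    have hz : ∀ i ∈ Finset.range k, (0 : ℝ) ≤ γ i := fun i _ => (hγpos i).le
    have h1 := Real.geom_mean_le_arith_mean_weighted (Finset.range k)
      (fun _ => 1 / (k : ℝ)) γ hw hw' hz
    have h2 : ∏ i ∈ Finset.range k, γ i ^ ((1 : ℝ) / (k : ℝ))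
        = (∏ i ∈ Finset.range k, γ i) ^ ((1 : ℝ) / (k : ℝ)) := by
      rw [← Real.finset_prod_rpow _ _ hz]
    have h3 : ∑ i ∈ Finset.range k, (1 / (k : ℝ)) * γ i = θ k / k := by
      rw [hθ, ← Finset.mul_sum]; ring
    rw [h2, h3] at h1
    have h4 : c ^ ((1 : ℝ) / (k : ℝ)) ≤ (∏ i ∈ Finset.range k, γ i) ^ ((1 : ℝ) / (k : ℝ)) := by
      apply Real.rpow_le_rpow hcpos.le _ (by positivity)
      rw [hprod k hk, hc]
      gcongr
      · exact (hαpos 0).le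
      · exact hlow (k - 1)
    have := h4.trans h1
    calc (k : ℝ) * c ^ ((1 : ℝ) / (k : ℝ)) ≤ (k : ℝ) * (θ k / k) := by
          exact mul_le_mul_of_nonneg_left this hkpos.le
      _ = θ k := by field_simp
  constructor
  · exact fun k hk => hmain k (by omega)
  · have htend : Filter.Tendsto (fun k : ℕ => c ^ ((1 : ℝ) / (k : ℝ))) Filter.atTop (nhds 1) := by
      have h0 : Filter.Tendsto (fun k : ℕ => (1 : ℝ) / (k : ℝ)) Filter.atTop (nhds 0) :=
        tendsto_one_div_atTop_nhds_zero_nat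
      have hcont : ContinuousAt (fun x : ℝ => c ^ x) 0 :=
        Real.continuousAt_const_rpow hcpos.ne'
      have := hcont.tendsto.comp h0
      simpa [Real.rpow_zero, Function.comp_def] using this
    have hev : ∀ᶠ k : ℕ in Filter.atTop, (1 : ℝ) / 2 ≤ c ^ ((1 : ℝ) / (k : ℝ)) := by
      have := htend.eventually_const_le (by norm_num : (1:ℝ)/2 < 1)
      exact this
    obtain ⟨K0, hK0⟩ := hev.exists_forall_of_atTop
    refine ⟨max K0 2, le_max_right _ _, fun k hk => ?_⟩
    have hk2 : 2 ≤ k := le_trans (le_max_right _ _) hk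
    have h1 := hmain k (by omega)
    have h2 := hK0 k (le_trans (le_max_left _ _) hk)
    have hkpos : (0 : ℝ) ≤ (k : ℝ) := by positivity
    calc (k : ℝ) / 2 = (k : ℝ) * (1 / 2) := by ring
      _ ≤ (k : ℝ) * c ^ ((1 : ℝ) / (k : ℝ)) := mul_le_mul_of_nonneg_left h2 hkpos
      _ ≤ θ k := h1
end

section
/- Under the setting of the previous item, define M(X) := F(X) − F(X*) + ⟨Ł Y*, X − X*⟩ + ‖Ł X‖². Then M(X) ≥ 0 for all X, M is convex, and M(X) = 0 if and only if Ł X = 0 and F(X) = F(X*) (i.e., X is a minimizer of F over {X : Ł X = 0}). -/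
open scoped RealInnerProductSpace

section Aux

variable {E : Type*} [NormedAddCommGroup E] [InnerProductSpace ℝ E] [CompleteSpace E]

/-- Gradient inequality for convex functions. -/
lemma aux_grad_ineq {f : E → ℝ} (hf : ConvexOn ℝ Set.univ f) {x gx : E}
    (hg : HasGradientAt f gx x) (y : E) : f x + ⟪gx, y - x⟫ ≤ f y := by
  set φ : ℝ → ℝ := fun t => f (t • (y - x) + x) with hφ
  have hφconv : ConvexOn ℝ Set.univ φ := by
    have h := hf.comp_affineMap (AffineMap.lineMap x y : ℝ →ᵃ[ℝ] E)
    simp only [Set.preimage_univ] at h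
    have heq : φ = f ∘ (AffineMap.lineMap x y : ℝ →ᵃ[ℝ] E) := by
      funext t
      simp [hφ, AffineMap.lineMap_apply, Function.comp]
    rw [heq]
    exact h
  have hline : HasDerivAt (fun t : ℝ => t • (y - x) + x) (y - x) 0 := by
    have h1 : HasDerivAt (fun t : ℝ => t • (y - x)) ((1 : ℝ) • (y - x)) 0 :=
      (hasDerivAt_id 0).smul_const (y - x)
    rw [one_smul] at h1
    exact h1.add_const x
  have hder : HasDerivAt φ ⟪gx, y - x⟫ 0 := by
    have hfd : HasFDerivAt f ((InnerProductSpace.toDual ℝ E) gx)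
        ((0:ℝ) • (y - x) + x) := by simpa using hg.hasFDerivAt
    have h2 := hfd.comp_hasDerivAt 0 hline
    simpa [hφ, Function.comp_def, InnerProductSpace.toDual_apply_apply] using h2
  have hslope := hφconv.le_slope_of_hasDerivAt (Set.mem_univ (0 : ℝ))
    (Set.mem_univ (1 : ℝ)) one_pos hder
  have h1 : φ 1 = f y := by simp [hφ]
  have h0 : φ 0 = f x := by simp [hφ]
  rw [slope_def_field, h1, h0] at hslope
  simp only [sub_zero, div_one] at hslope
  linarith

omit [CompleteSpace E] in
/-- The squared norm is convex. -/
lemma aux_convexOn_sq_norm : ConvexOn ℝ Set.univ (fun z : E => ‖z‖ ^ 2) := by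
  refine ⟨convex_univ, fun x _ y _ a b ha hb hab => ?_⟩
  have h1 : ‖a • x + b • y‖ ≤ a * ‖x‖ + b * ‖y‖ := by
    refine (norm_add_le _ _).trans ?_
    rw [norm_smul, norm_smul]
    simp [Real.norm_eq_abs, abs_of_nonneg ha, abs_of_nonneg hb]
  have h2 : (0:ℝ) ≤ ‖a • x + b • y‖ := norm_nonneg _
  have h3 : ‖a • x + b • y‖ ^ 2 ≤ (a * ‖x‖ + b * ‖y‖) ^ 2 := by
    exact pow_le_pow_left₀ h2 h1 2
  simp only [smul_eq_mul]
  nlinarith [h3, mul_nonneg (mul_nonneg ha hb) (sq_nonneg (‖x‖ - ‖y‖))]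

/-- Sum of convex functions over a finset is convex. -/
lemma aux_convexOn_sum {ι V : Type*} [AddCommGroup V] [Module ℝ V] (t : Finset ι)
    (F : ι → V → ℝ) (h : ∀ i ∈ t, ConvexOn ℝ Set.univ (F i)) :
    ConvexOn ℝ Set.univ (fun x => ∑ i ∈ t, F i x) := by
  classical
  induction t using Finset.cons_induction with
  | empty => simpa using convexOn_const (0:ℝ) convex_univ
  | cons i s his ih =>
    simp only [Finset.sum_cons]
    exact (h i (Finset.mem_cons_self i s)).add
      (ih fun j hj => h j (Finset.mem_cons_of_mem hj))

/-- Composition of a convex function with a linear map is convex. -/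
lemma aux_convexOn_comp_linear {V : Type*} [AddCommGroup V] [Module ℝ V]
    {W : Type*} [AddCommGroup W] [Module ℝ W] {f : W → ℝ}
    (hf : ConvexOn ℝ Set.univ f) (T : V →ₗ[ℝ] W) :
    ConvexOn ℝ Set.univ (fun x => f (T x)) := by
  have h := hf.comp_affineMap T.toAffineMap
  simpa [Function.comp_def] using h

end Aux

/-- Action of a matrix `Lm` on the stacked variable `X : Fin m → ℝ^d` (row-wise). -/
noncomputable def matApply10 {m d : ℕ} (Lm : Matrix (Fin m) (Fin m) ℝ)
    (X : Fin m → EuclideanSpace ℝ (Fin d)) : Fin m → EuclideanSpace ℝ (Fin d) :=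
  fun i => ∑ j, Lm i j • X j

/-- The merit function `M(X) = F(X) − F(X*) + ⟨ŁY*, X − X*⟩ + ‖ŁX‖²`. -/
noncomputable def meritM {m d : ℕ} (f : Fin m → EuclideanSpace ℝ (Fin d) → ℝ)
    (Lm : Matrix (Fin m) (Fin m) ℝ) (Xs Ys : Fin m → EuclideanSpace ℝ (Fin d))
    (X : Fin m → EuclideanSpace ℝ (Fin d)) : ℝ :=
  (∑ i, f i (X i)) - (∑ i, f i (Xs i)) + (∑ i, ⟪matApply10 Lm Ys i, X i - Xs i⟫)
    + ∑ i, ‖matApply10 Lm X i‖ ^ 2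

/-- the merit function `M` is nonnegative, convex, and vanishes
exactly at the minimizers of `F` over the consensus set `{X : ŁX = 0}`. -/
theorem stmt10 {m d : ℕ} (f : Fin m → EuclideanSpace ℝ (Fin d) → ℝ)
    (g : Fin m → EuclideanSpace ℝ (Fin d) → EuclideanSpace ℝ (Fin d))
    (hconv : ∀ i, ConvexOn ℝ Set.univ (f i))
    (hgrad : ∀ i x, HasGradientAt (f i) (g i x) x)
    (Lm : Matrix (Fin m) (Fin m) ℝ) (hLmSym : Lm.IsHermitian)
    (hLmPSD : Lm.PosSemidef)
    (hnull : ∀ v : Fin m → ℝ, Lm.mulVec v = 0 ↔ ∃ c : ℝ, v = fun _ => c)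
    (Xs Ys : Fin m → EuclideanSpace ℝ (Fin d))
    (hstat : ∀ i, g i (Xs i) + matApply10 Lm Ys i = 0)
    (hfeas : matApply10 Lm Xs = 0) :
    (∀ X, 0 ≤ meritM f Lm Xs Ys X) ∧
    ConvexOn ℝ Set.univ (meritM f Lm Xs Ys) ∧
    (∀ X, meritM f Lm Xs Ys X = 0 ↔
      (matApply10 Lm X = 0 ∧ (∑ i, f i (X i)) = ∑ i, f i (Xs i))) := by
  classical
  have hsym : ∀ i j, Lm i j = Lm j i := by
    intro i j
    conv_lhs => rw [← hLmSym]
    simp [Matrix.conjTranspose_apply]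
  -- swap lemma
  have hswap : ∀ (Y Z : Fin m → EuclideanSpace ℝ (Fin d)),
      (∑ i, ⟪matApply10 Lm Y i, Z i⟫) = ∑ j, ⟪Y j, matApply10 Lm Z j⟫ := by
    intro Y Z
    simp only [matApply10, sum_inner, inner_sum, real_inner_smul_left,
      real_inner_smul_right]
    rw [Finset.sum_comm]
    exact Finset.sum_congr rfl fun j _ => Finset.sum_congr rfl fun i _ => by
      rw [hsym i j]
  -- each (ŁXs)ᵢ is 0
  have hstat' : ∀ i, matApply10 Lm Ys i = -(g i (Xs i)) := fun i =>
    eq_neg_of_add_eq_zero_right (hstat i)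
  -- gap nonneg
  have hgap : ∀ X : Fin m → EuclideanSpace ℝ (Fin d), 0 ≤ (∑ i, f i (X i)) - (∑ i, f i (Xs i))
      + (∑ i, ⟪matApply10 Lm Ys i, X i - Xs i⟫) := by
    intro X
    have h1 : ∑ i, (f i (Xs i) + ⟪g i (Xs i), X i - Xs i⟫) ≤ ∑ i, f i (X i) :=
      Finset.sum_le_sum fun i _ => aux_grad_ineq (hconv i) (hgrad i (Xs i)) (X i)
    rw [Finset.sum_add_distrib] at h1
    have h2 : (∑ i, ⟪matApply10 Lm Ys i, X i - Xs i⟫)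
        = - ∑ i, ⟪g i (Xs i), X i - Xs i⟫ := by
      rw [← Finset.sum_neg_distrib]
      exact Finset.sum_congr rfl fun i _ => by rw [hstat' i, inner_neg_left]
    linarith
  have hquad : ∀ X : Fin m → EuclideanSpace ℝ (Fin d), (0:ℝ) ≤ ∑ i, ‖matApply10 Lm X i‖ ^ 2 :=
    fun X => Finset.sum_nonneg fun i _ => sq_nonneg _
  -- if ŁX = 0 then the linear term vanishes
  have hlin0 : ∀ X : Fin m → EuclideanSpace ℝ (Fin d), matApply10 Lm X = 0 →
      (∑ i, ⟪matApply10 Lm Ys i, X i - Xs i⟫) = 0 := by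
    intro X hX
    rw [hswap Ys (fun i => X i - Xs i)]
    have hz : ∀ j, matApply10 Lm (fun i => X i - Xs i) j = 0 := by
      intro j
      have : matApply10 Lm (fun i => X i - Xs i) j
          = matApply10 Lm X j - matApply10 Lm Xs j := by
        simp [matApply10, smul_sub, Finset.sum_sub_distrib]
      rw [this, hX, hfeas]
      simp
    simp only [hz, inner_zero_right, Finset.sum_const_zero]
  refine ⟨?_, ?_, ?_⟩
  · -- nonnegativity
    intro X
    have := hgap X
    have := hquad X
    unfold meritM
    linarith
  · -- convexity
    have c1 : ConvexOn ℝ Set.univ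
        (fun X : Fin m → EuclideanSpace ℝ (Fin d) => ∑ i, f i (X i)) := by
      refine aux_convexOn_sum _ _ fun i _ => ?_
      exact aux_convexOn_comp_linear (hconv i)
        (LinearMap.proj i : (Fin m → EuclideanSpace ℝ (Fin d)) →ₗ[ℝ]
          EuclideanSpace ℝ (Fin d))
    have c2 : ConvexOn ℝ Set.univ
        (fun X : Fin m → EuclideanSpace ℝ (Fin d) =>
          ∑ i, ⟪matApply10 Lm Ys i, X i - Xs i⟫) := by
      refine aux_convexOn_sum _ _ fun i _ => ?_
      have hlin : ConvexOn ℝ Set.univ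
          (fun X : Fin m → EuclideanSpace ℝ (Fin d) => ⟪matApply10 Lm Ys i, X i⟫) := by
        exact ((innerSL ℝ (matApply10 Lm Ys i)).toLinearMap.comp
          (LinearMap.proj i : (Fin m → EuclideanSpace ℝ (Fin d)) →ₗ[ℝ]
            EuclideanSpace ℝ (Fin d))).convexOn convex_univ
      have heq : (fun X : Fin m → EuclideanSpace ℝ (Fin d) =>
          ⟪matApply10 Lm Ys i, X i - Xs i⟫)
          = fun X => ⟪matApply10 Lm Ys i, X i⟫ + (-⟪matApply10 Lm Ys i, Xs i⟫) := by
        funext X; rw [inner_sub_right]; ring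
      rw [heq]
      exact hlin.add (convexOn_const _ convex_univ)
    have c3 : ConvexOn ℝ Set.univ
        (fun X : Fin m → EuclideanSpace ℝ (Fin d) =>
          ∑ i, ‖matApply10 Lm X i‖ ^ 2) := by
      refine aux_convexOn_sum _ _ fun i _ => ?_
      have hT : ConvexOn ℝ Set.univ
          (fun X : Fin m → EuclideanSpace ℝ (Fin d) =>
            ‖(∑ j, Lm i j • (LinearMap.proj j :
              (Fin m → EuclideanSpace ℝ (Fin d)) →ₗ[ℝ] _)) X‖ ^ 2) :=
        aux_convexOn_comp_linear aux_convexOn_sq_norm _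
      have heq2 : (fun X : Fin m → EuclideanSpace ℝ (Fin d) =>
          ‖matApply10 Lm X i‖ ^ 2)
          = fun X => ‖(∑ j, Lm i j • (LinearMap.proj j :
              (Fin m → EuclideanSpace ℝ (Fin d)) →ₗ[ℝ] _)) X‖ ^ 2 := by
        funext X
        simp [matApply10, LinearMap.sum_apply, LinearMap.smul_apply]
      rw [heq2]
      exact hT
    have heq : meritM f Lm Xs Ys
        = fun X => ((∑ i, f i (X i)) + (-(∑ i, f i (Xs i))))
          + ((∑ i, ⟪matApply10 Lm Ys i, X i - Xs i⟫)
          + ∑ i, ‖matApply10 Lm X i‖ ^ 2) := by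
      funext X; unfold meritM; ring
    rw [heq]
    exact ((c1.add (convexOn_const _ convex_univ)).add (c2.add c3))
  · -- zero iff
    intro X
    constructor
    · intro hM
      have hg := hgap X
      have hq := hquad X
      have hq0 : (∑ i, ‖matApply10 Lm X i‖ ^ 2) = 0 := by
        unfold meritM at hM; linarith
      have hX0 : matApply10 Lm X = 0 := by
        funext i
        have := (Finset.sum_eq_zero_iff_of_nonneg
          (fun i _ => sq_nonneg ‖matApply10 Lm X i‖)).mp hq0 i (Finset.mem_univ i)
        have hn : ‖matApply10 Lm X i‖ = 0 := by
          nlinarith [norm_nonneg (matApply10 Lm X i)]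
        simpa using norm_eq_zero.mp hn
      refine ⟨hX0, ?_⟩
      have hl := hlin0 X hX0
      unfold meritM at hM
      rw [hl, hq0] at hM
      linarith
    · rintro ⟨hX0, hF⟩
      have hl := hlin0 X hX0
      have hq0 : (∑ i, ‖matApply10 Lm X i‖ ^ 2) = 0 := by
        rw [hX0]; simp
      unfold meritM
      rw [hl, hq0, hF]
      ring
end

section
/- Let η ∈ (0,1), ᾱ_hat > 0, and (δ^k)_{k≥0} a summable nonnegative sequence. Let (α^k)_{k≥0} be positive reals such that for each k in an index set 𝒦 one has α^k ≤ η·α^{k-1} + δ^k, and for k ∉ 𝒦 one has α^k ≤ α^{k-1} + δ^k, and suppose α^k ≥ ᾱ > 0 for all k (uniform lower bound). Then 𝒦 is finite. -/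
/-!
Each decrease event costs the stepsize at least `(1 - η) ᾱ`, since `η α ≤ α - (1 - η) ᾱ`
whenever `α ≥ ᾱ`, while every step can raise it by at most `δ^k`. Telescoping, the number of
decrease events up to time `n` is at most `(α^0 + ∑ δ^k - ᾱ) / ((1 - η) ᾱ)`, which is bounded
because the partial sums of a summable sequence are.
-/

open Finset

namespace Nat

theorem finite_setOf_of_count_le {p : ℕ → Prop} [DecidablePred p] (B : ℕ)
    (h : ∀ n, count p n ≤ B) : {n | p n}.Finite := by
  by_contra hinf
  have hB := h (nth p (B + 1))
  rw [count_nth_of_infinite hinf] at hB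
  omega

end Nat

section DecreaseEvents

variable {a δ : ℕ → ℝ} {c : ℝ} {p : ℕ → Prop} [DecidablePred p]

theorem add_mul_count_le_add_sum (hstep : ∀ n, a (n + 1) + (if p n then c else 0) ≤ a n + δ n)
    (n : ℕ) : a n + c * Nat.count p n ≤ a 0 + ∑ k ∈ range n, δ k := by
  induction n with
  | zero => simp
  | succ n ih =>
    have := hstep n
    rw [Nat.count_succ, sum_range_succ]
    split_ifs at this ⊢ <;> push_cast <;> linarith

theorem finite_setOf_of_decrease (hc : 0 < c) (ha : BddBelow (Set.range a))
    (hδ : BddAbove (Set.range fun n ↦ ∑ k ∈ range n, δ k))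
    (hstep : ∀ n, a (n + 1) + (if p n then c else 0) ≤ a n + δ n) : {n | p n}.Finite := by
  obtain ⟨m, hm⟩ := ha
  obtain ⟨S, hS⟩ := hδ
  refine Nat.finite_setOf_of_count_le ⌈(a 0 + S - m) / c⌉₊ fun n ↦ ?_
  have hcount : (Nat.count p n : ℝ) ≤ (a 0 + S - m) / c := by
    rw [le_div_iff₀ hc]
    have := add_mul_count_le_add_sum hstep n
    have := hm ⟨n, rfl⟩
    have := hS ⟨n, rfl⟩
    linarith
  exact_mod_cast hcount.trans (Nat.le_ceil _)

end DecreaseEvents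

theorem stmt12_general (η αbar : ℝ) (hη : 0 < η ∧ η < 1) (hαbar : 0 < αbar)
    (δ : ℕ → ℝ) (hsum : Summable δ)
    (α : ℕ → ℝ) (K : Set ℕ)
    (hdec : ∀ k, 1 ≤ k → k ∈ K → α k ≤ η * α (k - 1) + δ k)
    (hinc : ∀ k, 1 ≤ k → k ∉ K → α k ≤ α (k - 1) + δ k)
    (hlow : ∀ k, αbar ≤ α k) :
    K.Finite := by
  classical
  have hc : 0 < (1 - η) * αbar := mul_pos (by linarith [hη.2]) hαbar
  have hpartial : BddAbove (Set.range fun n ↦ ∑ k ∈ range n, δ (k + 1)) :=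
    ((summable_nat_add_iff 1).mpr hsum).hasSum.tendsto_sum_nat.bddAbove_range
  have hstep : ∀ n, α (n + 1) + (if n + 1 ∈ K then (1 - η) * αbar else 0) ≤ α n + δ (n + 1) := by
    intro n
    split_ifs with hK
    · have hdrop : (1 - η) * αbar ≤ (1 - η) * α n :=
        mul_le_mul_of_nonneg_left (hlow n) (by linarith [hη.2])
      have := hdec (n + 1) (Nat.le_add_left 1 n) hK
      rw [Nat.add_sub_cancel] at this
      linarith
    · simpa using hinc (n + 1) (Nat.le_add_left 1 n) hK
  have hshift : {n | n + 1 ∈ K}.Finite :=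
    finite_setOf_of_decrease hc ⟨αbar, Set.forall_mem_range.2 hlow⟩ hpartial hstep
  refine ((hshift.image (· + 1)).insert 0).subset fun k hk ↦ ?_
  cases k with
  | zero => exact Set.mem_insert 0 _
  | succ n => exact Set.mem_insert_of_mem 0 ⟨n, hk, rfl⟩

/-- finiteness of the decrease events. If `α k ≥ ᾱ > 0` uniformly,
`α k ≤ η α (k-1) + δ k` for `k ∈ 𝒦` (with `η ∈ (0,1)`), `α k ≤ α (k-1) + δ k`
otherwise, and `δ` is summable and nonnegative, then `𝒦` is finite. -/
theorem stmt12 (η αbar : ℝ) (hη : 0 < η ∧ η < 1) (hαbar : 0 < αbar)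
    (δ : ℕ → ℝ) (hδ : ∀ k, 0 ≤ δ k) (hsum : Summable δ)
    (α : ℕ → ℝ) (K : Set ℕ)
    (hdec : ∀ k, 1 ≤ k → k ∈ K → α k ≤ η * α (k - 1) + δ k)
    (hinc : ∀ k, 1 ≤ k → k ∉ K → α k ≤ α (k - 1) + δ k)
    (hlow : ∀ k, αbar ≤ α k) :
    K.Finite :=
  stmt12_general η αbar hη hαbar δ hsum α K hdec hinc hlow
end
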